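/- arXiv:0704.1924 — 3 statements merged into one kernel-verified Lean document; each statement's English description precedes it below -/
import Mathlib

section
/- Let M^a and M^{ac} be symmetric positive definite n×n matrices, q ∈ ℝ^n, and let y^a, y^{ac}, g^a, g^{ac} solve M^a y^a = f^a, M^{ac} y^{ac} = f^{ac}, M^a g^a = q, M^{ac} g^{ac} = q. Set e = y^a − y^{ac}, ê = g^a − g^{ac}, and R^a(y) = f^a − M^a y. Then q^T e = g^{ac T} R^a(y^{ac}) + ê^T M^a e. -/
open Matrix

/-- Error representation: with `Mᵃ yᵃ = fᵃ`, `Mᵃᶜ yᵃᶜ = fᵃᶜ`, `Mᵃ gᵃ = q`,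
`Mᵃᶜ gᵃᶜ = q`, `e = yᵃ − yᵃᶜ`, `ê = gᵃ − gᵃᶜ`, `Rᵃ(y) = fᵃ − Mᵃy`, one has
`qᵀ e = gᵃᶜᵀ Rᵃ(yᵃᶜ) + êᵀ Mᵃ e`. -/
theorem stmt_9 (n : ℕ) (Ma Mac : Matrix (Fin n) (Fin n) ℝ)
    (hMa : Ma.PosDef) (hMac : Mac.PosDef)
    (fa fac q ya yac ga gac : Fin n → ℝ)
    (hya : Ma.mulVec ya = fa) (hyac : Mac.mulVec yac = fac)
    (hga : Ma.mulVec ga = q) (hgac : Mac.mulVec gac = q) :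
    q ⬝ᵥ (ya - yac) =
      gac ⬝ᵥ (fa - Ma.mulVec yac) + (ga - gac) ⬝ᵥ Ma.mulVec (ya - yac) := by
  have hsym : Maᵀ = Ma := by
    have := hMa.isHermitian
    simpa [Matrix.IsHermitian] using this
  subst hya hga
  simp only [Matrix.mulVec_sub, sub_dotProduct, dotProduct_sub,
    Matrix.dotProduct_mulVec]
  rw [show gac ᵥ* Ma = Ma.mulVec gac from by rw [← hsym, Matrix.vecMul_transpose, hsym],
      show (ga - gac) ᵥ* Ma = Ma.mulVec (ga - gac) from by
        rw [← hsym, Matrix.vecMul_transpose, hsym],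
      Matrix.mulVec_sub, sub_dotProduct]
  simp only [sub_dotProduct]
  ring
end

section
/- With M^a = J^T(D^{aT} E^a D^a + K^a)J, M^{ac} = J^T(D^{aT} E^{ac} D^a + K^a)J, f^a = −J^T D^{aT} E^a D^a (y^{bc} − a^a) − J^T K^a (y^{bc} − b^a), f^{ac} defined analogously with E^{ac}, and P = I − (E^a)^{-1} E^{ac}, the primal and dual errors e = y^a − y^{ac}, ê = g^a − g^{ac} (where M^a y^a = f^a, M^{ac} y^{ac} = f^{ac}, M^a g^a = M^{ac} g^{ac} = q) satisfy, for any α, β ∈ ℝ: M^a(αe + βê) = −J^T D^{aT} E^a P D^a [α(J y^{ac} + y^{bc} − a^a) + β J g^{ac}]. -/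
open Matrix

/-- Representation lemma: with `Mᵃ = Jᵀ(DᵀEᵃD + Kᵃ)J`, `Mᵃᶜ = Jᵀ(DᵀEᵃᶜD + Kᵃ)J`,
`fᵃ = −JᵀDᵀEᵃD(y^{bc}−aᵃ) − JᵀKᵃ(y^{bc}−bᵃ)`, `fᵃᶜ` analogous with `Eᵃᶜ`, and
`P = I − (Eᵃ)⁻¹Eᵃᶜ`, the primal and dual errors `e = yᵃ − yᵃᶜ`, `ê = gᵃ − gᵃᶜ` satisfy
`Mᵃ(αe + βê) = −JᵀDᵀEᵃPD[α(Jyᵃᶜ + y^{bc} − aᵃ) + βJgᵃᶜ]` for all `α, β`. -/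
theorem stmt_10 (n₀ n m : ℕ)
    (J : Matrix (Fin n) (Fin n₀) ℝ) (D : Matrix (Fin m) (Fin n) ℝ)
    (Ea Eac : Matrix (Fin m) (Fin m) ℝ) (K : Matrix (Fin n) (Fin n) ℝ)
    (hEa : IsUnit Ea.det)
    (aa ba ybc : Fin n → ℝ) (q : Fin n₀ → ℝ)
    (Ma Mac : Matrix (Fin n₀) (Fin n₀) ℝ) (P : Matrix (Fin m) (Fin m) ℝ)
    (hMa : Ma = Jᵀ * (Dᵀ * Ea * D + K) * J)
    (hMac : Mac = Jᵀ * (Dᵀ * Eac * D + K) * J)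
    (hP : P = 1 - Ea⁻¹ * Eac)
    (fa fac : Fin n₀ → ℝ)
    (hfa : fa = -((Jᵀ * Dᵀ * Ea * D).mulVec (ybc - aa)) - (Jᵀ * K).mulVec (ybc - ba))
    (hfac : fac = -((Jᵀ * Dᵀ * Eac * D).mulVec (ybc - aa)) - (Jᵀ * K).mulVec (ybc - ba))
    (ya yac ga gac : Fin n₀ → ℝ)
    (hya : Ma.mulVec ya = fa) (hyac : Mac.mulVec yac = fac)
    (hga : Ma.mulVec ga = q) (hgac : Mac.mulVec gac = q)
    (α β : ℝ) :
    Ma.mulVec (α • (ya - yac) + β • (ga - gac)) =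
      -((Jᵀ * Dᵀ * Ea * P * D).mulVec
          (α • (J.mulVec yac + ybc - aa) + β • J.mulVec gac)) := by

  have h1 : Ea * P = Ea - Eac := by
    rw [hP, Matrix.mul_sub, Matrix.mul_one, ← Matrix.mul_assoc,
      Matrix.mul_nonsing_inv Ea hEa, Matrix.one_mul]
  set C : Matrix (Fin n₀) (Fin n) ℝ := Jᵀ * Dᵀ * (Ea - Eac) * D with hC
  have hEP : Jᵀ * Dᵀ * Ea * P * D = C := by
    rw [hC, Matrix.mul_assoc (Jᵀ * Dᵀ) Ea P, h1]
  have hCsplit : C = Jᵀ * Dᵀ * Ea * D - Jᵀ * Dᵀ * Eac * D := by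
    rw [hC]
    simp only [Matrix.mul_sub, Matrix.sub_mul]
  have hMsub : Ma = Mac + C * J := by
    rw [hMa, hMac, hCsplit]
    simp only [Matrix.add_mul, Matrix.mul_add, Matrix.sub_mul, Matrix.mul_sub, Matrix.mul_assoc]
    abel
  have hfsub : fa = fac - C.mulVec (ybc - aa) := by
    rw [hfa, hfac, hCsplit, Matrix.sub_mulVec]
    abel
  have hMyac : Ma.mulVec yac = fac + C.mulVec (J.mulVec yac) := by
    rw [hMsub, Matrix.add_mulVec, hyac, Matrix.mulVec_mulVec]
  have hMgac : Ma.mulVec gac = q + C.mulVec (J.mulVec gac) := by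
    rw [hMsub, Matrix.add_mulVec, hgac, Matrix.mulVec_mulVec]
  rw [hEP]
  simp only [Matrix.mulVec_add, Matrix.mulVec_smul, Matrix.mulVec_sub, hya, hga,
    hMyac, hMgac, hfsub]
  module
end

section
/- Under the assumptions of the previous representation lemma, with E^a symmetric positive definite and K^a symmetric positive definite, one has ‖αe + βê‖_{M^a} ≤ ‖P D^a[α(J y^{ac} + y^{bc} − a^a) + β J g^{ac}]‖_{E^a} for all α, β ∈ ℝ, where ‖v‖_M := (v^T M v)^{1/2}. -/
/-!
With `N = Jᵀ Dᵀ (Eᵃ - Eᵃᶜ) D`, one has `Mᵃ = Mᵃᶜ + N J`, and subtracting the two linear systems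
gives `Mᵃ v = -N z` for `v = αe + βê`. Since `Eᵃ P = Eᵃ - Eᵃᶜ`, this reads `Mᵃ v = -Jᵀ Dᵀ Eᵃ w`
with `w = P D z`, so `‖v‖²_{Mᵃ} = -⟪D J v, w⟫_{Eᵃ} ≤ ‖D J v‖_{Eᵃ} ‖w‖_{Eᵃ} ≤ ‖v‖_{Mᵃ} ‖w‖_{Eᵃ}`.
-/

open Matrix

theorem Matrix.PosSemidef.dotProduct_mulVec_sq_le {ι : Type*} [Fintype ι]
    {A : Matrix ι ι ℝ} (hA : A.PosSemidef) (x y : ι → ℝ) :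
    (x ⬝ᵥ A *ᵥ y) ^ 2 ≤ (x ⬝ᵥ A *ᵥ x) * (y ⬝ᵥ A *ᵥ y) := by
  classical
  have hsymm : LinearMap.IsSymm A.toBilin' :=
    LinearMap.BilinForm.isSymm_iff.mp (isSymm_toBilin'_iff_isSymm.mpr hA.isHermitian)
  have hnonneg (z : ι → ℝ) : 0 ≤ A.toBilin' z z := by
    simpa only [toBilin'_apply', star_trivial] using hA.dotProduct_mulVec_nonneg z
  simpa only [toBilin'_apply'] using A.toBilin'.apply_sq_le_of_symm hnonneg hsymm x y

section

variable {l m n : Type*} [Fintype l] [Fintype m] [Fintype n]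

theorem Matrix.dotProduct_transpose_mul_mul_mulVec (B : Matrix m n ℝ) (A : Matrix m m ℝ)
    (x y : n → ℝ) : x ⬝ᵥ (Bᵀ * A * B) *ᵥ y = (B *ᵥ x) ⬝ᵥ A *ᵥ (B *ᵥ y) := by
  rw [Matrix.mul_assoc, ← mulVec_mulVec, dotProduct_transpose_mulVec, ← mulVec_mulVec,
    dotProduct_comm]

theorem Matrix.dotProduct_mulVec_transpose_mul (B : Matrix m n ℝ) (A : Matrix m m ℝ)
    (x : n → ℝ) (y : m → ℝ) : x ⬝ᵥ (Bᵀ * A) *ᵥ y = (B *ᵥ x) ⬝ᵥ A *ᵥ y := by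
  rw [← mulVec_mulVec, dotProduct_transpose_mulVec, dotProduct_comm]

theorem dotProduct_transpose_mul_add_mul_mulVec (J : Matrix n l ℝ) (D : Matrix m n ℝ)
    (E : Matrix m m ℝ) (K : Matrix n n ℝ) (v : l → ℝ) :
    v ⬝ᵥ (Jᵀ * (Dᵀ * E * D + K) * J) *ᵥ v =
      (D *ᵥ J *ᵥ v) ⬝ᵥ E *ᵥ (D *ᵥ J *ᵥ v) + (J *ᵥ v) ⬝ᵥ K *ᵥ (J *ᵥ v) := by
  rw [dotProduct_transpose_mul_mul_mulVec, add_mulVec, dotProduct_add,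
    dotProduct_transpose_mul_mul_mulVec]

theorem dotProduct_mulVec_le_of_mulVec_eq_neg {J : Matrix n l ℝ} {D : Matrix m n ℝ}
    {E : Matrix m m ℝ} {K : Matrix n n ℝ} (hE : E.PosSemidef) (hK : K.PosSemidef)
    {v : l → ℝ} {w : m → ℝ} (hv : (Jᵀ * (Dᵀ * E * D + K) * J) *ᵥ v = -((Jᵀ * Dᵀ * E) *ᵥ w)) :
    v ⬝ᵥ (Jᵀ * (Dᵀ * E * D + K) * J) *ᵥ v ≤ w ⬝ᵥ E *ᵥ w := by
  set Q := v ⬝ᵥ (Jᵀ * (Dᵀ * E * D + K) * J) *ᵥ v with hQ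
  set u := D *ᵥ J *ᵥ v
  have hQ_split : Q = u ⬝ᵥ E *ᵥ u + (J *ᵥ v) ⬝ᵥ K *ᵥ (J *ᵥ v) :=
    dotProduct_transpose_mul_add_mul_mulVec J D E K v
  have hQ_eq : Q = -(u ⬝ᵥ E *ᵥ w) := by
    rw [hQ, hv, dotProduct_neg, ← transpose_mul,
      dotProduct_mulVec_transpose_mul, ← mulVec_mulVec]
  have hu := hE.dotProduct_mulVec_nonneg u
  have hJv := hK.dotProduct_mulVec_nonneg (J *ᵥ v)
  have hw := hE.dotProduct_mulVec_nonneg w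
  simp only [star_trivial] at hu hJv hw
  have hQ_sq : Q ^ 2 ≤ Q * (w ⬝ᵥ E *ᵥ w) :=
    calc Q ^ 2 = (u ⬝ᵥ E *ᵥ w) ^ 2 := by rw [hQ_eq, neg_sq]
      _ ≤ (u ⬝ᵥ E *ᵥ u) * (w ⬝ᵥ E *ᵥ w) := hE.dotProduct_mulVec_sq_le u w
      _ ≤ Q * (w ⬝ᵥ E *ᵥ w) := mul_le_mul_of_nonneg_right (by linarith) hw
  nlinarith

variable {J : Matrix m l ℝ} {N : Matrix l m ℝ} {Ma Mc : Matrix l l ℝ}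

theorem mulVec_sub_eq_of_eq_add_mul (hM : Ma = Mc + N * J) {b x y : l → ℝ} {r : m → ℝ}
    (hx : Ma *ᵥ x = b - N *ᵥ r) (hy : Mc *ᵥ y = b) :
    Ma *ᵥ (x - y) = -(N *ᵥ (J *ᵥ y + r)) := by
  rw [mulVec_sub, hx, hM, add_mulVec, hy, ← mulVec_mulVec, mulVec_add]
  abel

theorem mulVec_smul_sub_add_smul_sub_eq {J : Matrix n l ℝ} {D : Matrix m n ℝ}
    {Ea Eac : Matrix m m ℝ} {K : Matrix n n ℝ} {Ma Mac : Matrix l l ℝ}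
    (hMa : Ma = Jᵀ * (Dᵀ * Ea * D + K) * J) (hMac : Mac = Jᵀ * (Dᵀ * Eac * D + K) * J)
    {aa ba ybc : n → ℝ} {q ya yac ga gac : l → ℝ}
    (hya : Ma *ᵥ ya = -((Jᵀ * Dᵀ * Ea * D) *ᵥ (ybc - aa)) - (Jᵀ * K) *ᵥ (ybc - ba))
    (hyac : Mac *ᵥ yac = -((Jᵀ * Dᵀ * Eac * D) *ᵥ (ybc - aa)) - (Jᵀ * K) *ᵥ (ybc - ba))
    (hga : Ma *ᵥ ga = q) (hgac : Mac *ᵥ gac = q) (α β : ℝ) :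
    Ma *ᵥ (α • (ya - yac) + β • (ga - gac)) =
      -((Jᵀ * Dᵀ * (Ea - Eac) * D) *ᵥ (α • (J *ᵥ yac + ybc - aa) + β • J *ᵥ gac)) := by
  set N := Jᵀ * Dᵀ * (Ea - Eac) * D
  have hM : Ma = Mac + N * J := by
    rw [hMa, hMac]
    simp only [N, Matrix.mul_sub, Matrix.sub_mul, Matrix.mul_add, Matrix.add_mul,
      Matrix.mul_assoc]
    abel
  have hya' : Ma *ᵥ ya = Mac *ᵥ yac - N *ᵥ (ybc - aa) := by
    rw [hya, hyac]
    simp only [N, Matrix.mul_sub, Matrix.sub_mul, sub_mulVec]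
    abel
  have hy := mulVec_sub_eq_of_eq_add_mul hM hya' rfl
  have hg := mulVec_sub_eq_of_eq_add_mul hM (r := 0) (by rw [hga, mulVec_zero, sub_zero]) hgac
  rw [mulVec_add, mulVec_smul, mulVec_smul, hy, hg, add_zero, add_sub_assoc]
  simp only [mulVec_add, mulVec_smul]
  module

end

/-- Under the assumptions of the representation lemma, with `Eᵃ` and `Kᵃ` symmetric
positive definite, `‖αe + βê‖_{Mᵃ} ≤ ‖PD[α(Jyᵃᶜ + y^{bc} − aᵃ) + βJgᵃᶜ]‖_{Eᵃ}`. -/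
theorem stmt_11 (n₀ n m : ℕ)
    (J : Matrix (Fin n) (Fin n₀) ℝ) (D : Matrix (Fin m) (Fin n) ℝ)
    (Ea Eac : Matrix (Fin m) (Fin m) ℝ) (K : Matrix (Fin n) (Fin n) ℝ)
    (hEaPD : Ea.PosDef) (hKPD : K.PosDef)
    (aa ba ybc : Fin n → ℝ) (q : Fin n₀ → ℝ)
    (Ma Mac : Matrix (Fin n₀) (Fin n₀) ℝ) (P : Matrix (Fin m) (Fin m) ℝ)
    (hMa : Ma = Jᵀ * (Dᵀ * Ea * D + K) * J)
    (hMac : Mac = Jᵀ * (Dᵀ * Eac * D + K) * J)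
    (hP : P = 1 - Ea⁻¹ * Eac)
    (fa fac : Fin n₀ → ℝ)
    (hfa : fa = -((Jᵀ * Dᵀ * Ea * D).mulVec (ybc - aa)) - (Jᵀ * K).mulVec (ybc - ba))
    (hfac : fac = -((Jᵀ * Dᵀ * Eac * D).mulVec (ybc - aa)) - (Jᵀ * K).mulVec (ybc - ba))
    (ya yac ga gac : Fin n₀ → ℝ)
    (hya : Ma.mulVec ya = fa) (hyac : Mac.mulVec yac = fac)
    (hga : Ma.mulVec ga = q) (hgac : Mac.mulVec gac = q)
    (α β : ℝ) :
    Real.sqrt ((α • (ya - yac) + β • (ga - gac)) ⬝ᵥ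
        Ma.mulVec (α • (ya - yac) + β • (ga - gac))) ≤
      Real.sqrt ((P.mulVec (D.mulVec (α • (J.mulVec yac + ybc - aa) + β • J.mulVec gac)))
        ⬝ᵥ Ea.mulVec
          (P.mulVec (D.mulVec (α • (J.mulVec yac + ybc - aa) + β • J.mulVec gac)))) := by
  subst hfa hfac
  have hEaP : Ea * P = Ea - Eac := by
    rw [hP, Matrix.mul_sub, Matrix.mul_one, ← Matrix.mul_assoc,
      mul_nonsing_inv _ ((isUnit_iff_isUnit_det Ea).mp hEaPD.isUnit), Matrix.one_mul]
  have hrep := mulVec_smul_sub_add_smul_sub_eq hMa hMac hya hyac hga hgac α β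
  rw [← hEaP] at hrep
  subst hMa
  refine Real.sqrt_le_sqrt (dotProduct_mulVec_le_of_mulVec_eq_neg hEaPD.posSemidef
    hKPD.posSemidef ?_)
  rw [hrep]
  simp only [mulVec_mulVec, Matrix.mul_assoc]
end
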